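/- Let W be a Weyl group with Bruhat graph 𝔾 (edges w' → w'' when l(w'') = l(w')+1 and w'' = w' s_γ for a reflection s_γ). If w, w'' ∈ W with w ≤ w'' in Bruhat order and l(w'') = l(w) + 2, then the number of elements w' ∈ W with edges w → w' and w' → w'' is either 0 or 2. -/

import Mathlib

/-- Edges of the Bruhat graph: `w → w'` when `w' = w·t` for a reflection `t` and
`ℓ(w') = ℓ(w) + 1`. -/
def BruhatEdge {B W : Type} [Group W] {M : CoxeterMatrix B} (cs : CoxeterSystem M W)
    (w w' : W) : Prop :=
  (∃ t : W, cs.IsReflection t ∧ w' = w * t) ∧ cs.length w' = cs.length w + 1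

/-- The Bruhat order, generated by the edges of the Bruhat graph. -/
def BruhatLE {B W : Type} [Group W] {M : CoxeterMatrix B} (cs : CoxeterSystem M W) :
    W → W → Prop :=
  Relation.ReflTransGen (BruhatEdge cs)

namespace BGGAux

open List CoxeterSystem

attribute [local instance] Classical.propDecidable

variable {B W : Type} [Group W] {M : CoxeterMatrix B} (cs : CoxeterSystem M W)

/-- The function on `W × ℤˣ` associated to a simple reflection. -/
noncomputable def perFun (i : B) : W × ℤˣ → W × ℤˣ :=
  fun p => (cs.simple i * p.1 * cs.simple i, if p.1 = cs.simple i then -p.2 else p.2)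

theorem perFun_involutive (i : B) : Function.Involutive (perFun cs i) := by
  rintro ⟨t, e⟩
  simp only [perFun]
  have h1 : cs.simple i * (cs.simple i * t * cs.simple i) * cs.simple i = t := by
    rw [← mul_assoc, ← mul_assoc, cs.simple_mul_simple_self, one_mul, mul_assoc,
      cs.simple_mul_simple_self, mul_one]
  have h2 : (cs.simple i * t * cs.simple i = cs.simple i) ↔ t = cs.simple i := by
    constructor
    · intro h
      have := congrArg (fun x => cs.simple i * x * cs.simple i) h
      simpa [h1, ← mul_assoc, cs.simple_mul_simple_self] using this
    · rintro rfl
      rw [cs.simple_mul_simple_self, one_mul]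
  ext
  · exact h1
  · by_cases h : t = cs.simple i <;> simp [h, h2]

/-- The permutation of `W × ℤˣ` associated to a simple reflection. -/
noncomputable def per (i : B) : Equiv.Perm (W × ℤˣ) := (perFun_involutive cs i).toPerm

theorem per_apply (i : B) (t : W) (e : ℤˣ) :
    per cs i (t, e) = (cs.simple i * t * cs.simple i, if t = cs.simple i then -e else e) := rfl

theorem prod_per_apply (ω : List B) (t : W) (e : ℤˣ) :
    ((ω.map (per cs)).prod) (t, e) =
      (cs.wordProd ω * t * (cs.wordProd ω)⁻¹,
        (-1 : ℤˣ) ^ ((cs.rightInvSeq ω).count t) * e) := by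
  induction ω with
  | nil => simp [CoxeterSystem.rightInvSeq]
  | cons i ω ih =>
    rw [map_cons, prod_cons, Equiv.Perm.mul_apply, ih, per_apply]
    have hris : cs.rightInvSeq (i :: ω) =
        ((cs.wordProd ω)⁻¹ * cs.simple i * cs.wordProd ω) :: cs.rightInvSeq ω := rfl
    rw [hris, count_cons]
    have hcond : (cs.wordProd ω * t * (cs.wordProd ω)⁻¹ = cs.simple i) ↔
        ((cs.wordProd ω)⁻¹ * cs.simple i * cs.wordProd ω = t) := by
      constructor
      · intro h
        rw [← h]; group
      · intro h
        rw [← h]; group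
    have hfst : cs.simple i * (cs.wordProd ω * t * (cs.wordProd ω)⁻¹) * cs.simple i =
        cs.wordProd (i :: ω) * t * (cs.wordProd (i :: ω))⁻¹ := by
      rw [cs.wordProd_cons, mul_inv_rev, cs.inv_simple]; group
    have hsnd : (if cs.wordProd ω * t * (cs.wordProd ω)⁻¹ = cs.simple i
          then -((-1 : ℤˣ) ^ count t (cs.rightInvSeq ω) * e)
          else (-1 : ℤˣ) ^ count t (cs.rightInvSeq ω) * e) =
        (-1 : ℤˣ) ^ (count t (cs.rightInvSeq ω) +
          if (cs.wordProd ω)⁻¹ * cs.simple i * cs.wordProd ω = t then 1 else 0) * e := by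
      by_cases h : (cs.wordProd ω)⁻¹ * cs.simple i * cs.wordProd ω = t
      · rw [if_pos (hcond.mpr h), if_pos h, pow_succ, mul_assoc, neg_one_mul, mul_neg]
      · rw [if_neg (fun hc => h (hcond.mp hc)), if_neg h, add_zero]
    simp only [beq_iff_eq]
    exact Prod.ext hfst hsnd


theorem drop_alternatingWord (i i' : B) (k n : ℕ) (h : k ≤ n) :
    (alternatingWord i i' n).drop k = alternatingWord i i' (n - k) := by
  induction k generalizing n with
  | zero => simp
  | succ k ih =>
    obtain ⟨m, rfl⟩ : ∃ m, n = m + 1 := ⟨n - 1, by omega⟩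
    rw [alternatingWord_succ', List.drop_succ_cons, ih m (by omega)]
    congr 1
    omega

theorem simple_conj_prod_alt (i i' : B) (r : ℕ) :
    cs.simple (if Even (M i i' + r) then i' else i) * cs.wordProd (alternatingWord i i' (M i i'))
      = cs.wordProd (alternatingWord i i' (M i i')) * cs.simple (if Even r then i' else i) := by
  set m := M i i' with hm
  set p := cs.simple i * cs.simple i' with hpdef
  have hp : p ^ m = 1 := cs.simple_mul_simple_pow i i'
  have hci : cs.simple i * p * cs.simple i = p⁻¹ := by
    rw [hpdef, mul_inv_rev, cs.inv_simple, cs.inv_simple, ← mul_assoc,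
      cs.simple_mul_simple_self, one_mul]
  have hci' : cs.simple i' * p * cs.simple i' = p⁻¹ := by
    rw [hpdef, mul_inv_rev, cs.inv_simple, cs.inv_simple, mul_assoc,
      mul_assoc, cs.simple_mul_simple_self, mul_one]
  have conjpow : ∀ (j : B), cs.simple j * p * cs.simple j = p⁻¹ →
      ∀ a : ℕ, cs.simple j * p ^ a * cs.simple j = (p ^ a)⁻¹ := by
    intro j hj a
    have : (MulAut.conj (cs.simple j)) (p ^ a) = ((MulAut.conj (cs.simple j)) p) ^ a :=
      map_pow _ _ _
    simp only [MulAut.conj_apply, cs.inv_simple] at this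
    rw [this, hj, inv_pow]
  have closed := cs.prod_alternatingWord_eq_mul_pow i i' m
  by_cases hev : Even m
  · obtain ⟨a, ha⟩ := hev
    have hdiv : m / 2 = a := by omega
    have hz : cs.wordProd (alternatingWord i i' m) = p ^ a := by
      rw [closed, if_pos ⟨a, ha⟩, hdiv, one_mul]
    have hzz : p ^ a * p ^ a = 1 := by rw [← pow_add, ← ha, hp]
    have hinv : (p ^ a)⁻¹ = p ^ a := inv_eq_of_mul_eq_one_right hzz
    have hiff : Even (m + r) ↔ Even r := by
      rw [Nat.even_add]; exact ⟨fun h => h.mp ⟨a, ha⟩, fun h => ⟨fun _ => h, fun _ => ⟨a, ha⟩⟩⟩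
    have key : ∀ (j : B), cs.simple j * p * cs.simple j = p⁻¹ →
        cs.simple j * p ^ a = p ^ a * cs.simple j := by
      intro j hj
      have e1 : cs.simple j * p ^ a * cs.simple j = p ^ a := by rw [conjpow j hj a, hinv]
      have := congrArg (· * cs.simple j) e1
      simpa [mul_assoc, cs.simple_mul_simple_self] using this
    by_cases hr : Even r
    · rw [if_pos (hiff.mpr hr), if_pos hr, hz, key i' hci']
    · rw [if_neg (fun h => hr (hiff.mp h)), if_neg hr, hz, key i hci]
  · have hodd : Odd m := Nat.not_even_iff_odd.mp hev
    obtain ⟨a, ha⟩ := hodd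
    have hdiv : m / 2 = a := by omega
    have hz : cs.wordProd (alternatingWord i i' m) = cs.simple i' * p ^ a := by
      rw [closed, if_neg hev, hdiv]
    have hfull : p ^ (a + 1) * p ^ a = 1 := by rw [← pow_add]; rw [show a + 1 + a = m by omega]; exact hp
    have hfull' : p ^ a * p ^ (a + 1) = 1 := by rw [← pow_add]; rw [show a + (a + 1) = m by omega]; exact hp
    have hiff : Even (m + r) ↔ ¬ Even r := by
      rw [Nat.even_add]
      constructor
      · intro h hr; exact hev (h.mpr hr)
      · intro h; constructor
        · intro hm'; exact absurd hm' hev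
        · intro hr; exact absurd hr h
    by_cases hr : Even r
    · rw [if_neg (fun h => (hiff.mp h) hr), if_pos hr, hz]
      -- goal : s i * (s i' * p ^ a) = (s i' * p ^ a) * s i'
      have lhs : cs.simple i * (cs.simple i' * p ^ a) = p ^ (a + 1) := by
        rw [← mul_assoc, ← hpdef, pow_succ']
      have rhs : (cs.simple i' * p ^ a) * cs.simple i' = (p ^ a)⁻¹ := by
        rw [mul_assoc, ← mul_assoc, conjpow i' hci' a]
      rw [lhs, rhs]
      exact eq_inv_of_mul_eq_one_left hfull
    · rw [if_pos (hiff.mpr hr), if_neg hr, hz]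
      -- goal : s i' * (s i' * p ^ a) = (s i' * p ^ a) * s i
      have lhs : cs.simple i' * (cs.simple i' * p ^ a) = p ^ a :=
        cs.simple_mul_simple_cancel_left i'
      have hps : p ^ a * cs.simple i = cs.simple i * (p ^ a)⁻¹ := by
        have := conjpow i hci a
        have := congrArg (cs.simple i * ·) this
        simpa [← mul_assoc, cs.simple_mul_simple_self] using this
      have rhs : (cs.simple i' * p ^ a) * cs.simple i = (p ^ (a + 1))⁻¹ := by
        rw [mul_assoc, hps, ← mul_assoc]
        rw [show cs.simple i' * cs.simple i = p⁻¹ by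
          rw [hpdef, mul_inv_rev, cs.inv_simple, cs.inv_simple]]
        rw [← mul_inv_rev, ← pow_succ]
      rw [lhs, rhs]
      exact eq_inv_of_mul_eq_one_left hfull'


theorem prod_alt_add (i i' : B) (r : ℕ) :
    cs.wordProd (alternatingWord i i' (M i i' + r)) =
      cs.wordProd (alternatingWord i i' (M i i')) * cs.wordProd (alternatingWord i i' r) := by
  induction r with
  | zero => simp [alternatingWord]
  | succ r ih =>
    calc cs.wordProd (alternatingWord i i' (M i i' + (r + 1)))
        = cs.simple (if Even (M i i' + r) then i' else i) *
            cs.wordProd (alternatingWord i i' (M i i' + r)) := by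
          rw [show M i i' + (r + 1) = (M i i' + r) + 1 by omega, alternatingWord_succ',
            cs.wordProd_cons]
      _ = cs.simple (if Even (M i i' + r) then i' else i) *
            (cs.wordProd (alternatingWord i i' (M i i')) * cs.wordProd (alternatingWord i i' r)) := by
          rw [ih]
      _ = (cs.wordProd (alternatingWord i i' (M i i')) * cs.simple (if Even r then i' else i)) *
            cs.wordProd (alternatingWord i i' r) := by
          rw [← mul_assoc, simple_conj_prod_alt]
      _ = cs.wordProd (alternatingWord i i' (M i i')) * cs.wordProd (alternatingWord i i' (r + 1)) := by
          rw [alternatingWord_succ', cs.wordProd_cons, mul_assoc]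

theorem getD_rightInvSeq_eq (ω : List B) (k : ℕ) (h : k < ω.length) :
    (cs.rightInvSeq ω).getD k 1 = (cs.wordProd (ω.drop (k + 1)))⁻¹ * cs.wordProd (ω.drop k) := by
  rw [cs.getD_rightInvSeq]
  rw [List.drop_eq_getElem_cons h, cs.wordProd_cons]
  rw [List.getElem?_eq_getElem h]
  simp [mul_assoc]

theorem ris_alt_double (i i' : B) :
    cs.rightInvSeq (alternatingWord i i' (2 * M i i')) =
      cs.rightInvSeq (alternatingWord i i' (M i i')) ++
        cs.rightInvSeq (alternatingWord i i' (M i i')) := by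
  set m := M i i' with hm
  have hlen2 : (alternatingWord i i' (2 * m)).length = 2 * m := length_alternatingWord i i' _
  have hlen1 : (alternatingWord i i' m).length = m := length_alternatingWord i i' _
  have hdrop : (cs.rightInvSeq (alternatingWord i i' (2 * m))).drop m
      = cs.rightInvSeq (alternatingWord i i' m) := by
    rw [← cs.rightInvSeq_drop, drop_alternatingWord i i' m (2 * m) (by omega),
      show 2 * m - m = m by omega]
  have htake : (cs.rightInvSeq (alternatingWord i i' (2 * m))).take m
      = cs.rightInvSeq (alternatingWord i i' m) := by
    apply List.ext_getElem
    · simp [hlen2, hlen1]; omega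
    intro k hk1 hk2
    rw [cs.length_rightInvSeq, hlen1] at hk2
    rw [List.getElem_take]
    rw [← List.getD_eq_getElem _ 1, ← List.getD_eq_getElem _ 1]
    rw [getD_rightInvSeq_eq cs _ k (by omega), getD_rightInvSeq_eq cs _ k (by omega)]
    rw [drop_alternatingWord i i' (k+1) (2*m) (by omega), drop_alternatingWord i i' k (2*m) (by omega),
      drop_alternatingWord i i' (k+1) m (by omega), drop_alternatingWord i i' k m (by omega)]
    rw [show 2 * m - (k + 1) = m + (m - (k + 1)) by omega, show 2 * m - k = m + (m - k) by omega]
    rw [prod_alt_add, prod_alt_add, mul_inv_rev]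
    simp [mul_assoc]
  conv_lhs => rw [← List.take_append_drop m (cs.rightInvSeq (alternatingWord i i' (2 * m)))]
  rw [htake, hdrop]

theorem count_ris_alt_even (i i' : B) (t : W) :
    Even ((cs.rightInvSeq (alternatingWord i i' (2 * M i i'))).count t) := by
  rw [ris_alt_double, List.count_append]
  exact Even.add_self _

theorem prod_map_per_alt (i i' : B) (n : ℕ) :
    ((alternatingWord i i' (2 * n)).map (per cs)).prod = (per cs i * per cs i') ^ n := by
  induction n with
  | zero => simp [alternatingWord]
  | succ n ih =>
    rw [show 2 * (n + 1) = (2 * n + 1) + 1 by omega, alternatingWord_succ', alternatingWord_succ']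
    rw [if_neg (by simp [Nat.even_add_one]), if_pos (by exact even_two_mul n)]
    rw [List.map_cons, List.map_cons, List.prod_cons, List.prod_cons, ih]
    rw [← mul_assoc, pow_succ']

theorem per_liftable : M.IsLiftable (per cs) := by
  intro i i'
  have hprod : cs.wordProd (alternatingWord i i' (2 * M i i')) = 1 := by
    rw [cs.prod_alternatingWord_eq_mul_pow, if_pos (even_two_mul _),
      show 2 * M i i' / 2 = M i i' by omega, one_mul, cs.simple_mul_simple_pow]
  apply Equiv.ext
  rintro ⟨t, e⟩
  rw [← prod_map_per_alt cs i i' (M i i'), prod_per_apply, hprod]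
  have heven := count_ris_alt_even cs i i' t
  rw [Even.neg_one_pow heven]
  simp

noncomputable def sgn : W →* Equiv.Perm (W × ℤˣ) := cs.lift ⟨per cs, per_liftable cs⟩

theorem sgn_wordProd (ω : List B) : sgn cs (cs.wordProd ω) = (ω.map (per cs)).prod := by
  rw [CoxeterSystem.wordProd, map_list_prod (sgn cs), List.map_map]
  congr 1
  apply List.map_congr_left
  intro i _
  exact cs.lift_apply_simple (per_liftable cs) i

theorem parity_count_eq {ω ω' : List B} (h : cs.wordProd ω = cs.wordProd ω') (t : W) :
    ((-1 : ℤˣ)) ^ ((cs.rightInvSeq ω).count t) = (-1) ^ ((cs.rightInvSeq ω').count t) := by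
  have h1 : (ω.map (per cs)).prod (t, (1 : ℤˣ)) = (ω'.map (per cs)).prod (t, (1 : ℤˣ)) := by
    rw [← sgn_wordProd, ← sgn_wordProd, h]
  rw [prod_per_apply, prod_per_apply] at h1
  have := congrArg Prod.snd h1
  simpa using this

theorem ris_append (κ τ : List B) :
    cs.rightInvSeq (κ ++ τ) =
      (cs.rightInvSeq κ).map (fun x => (cs.wordProd τ)⁻¹ * x * cs.wordProd τ)
        ++ cs.rightInvSeq τ := by
  induction κ with
  | nil => simp [CoxeterSystem.rightInvSeq]
  | cons a κ ih =>
    show ((cs.wordProd (κ ++ τ))⁻¹ * cs.simple a * cs.wordProd (κ ++ τ)) :: cs.rightInvSeq (κ ++ τ)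
        = _
    rw [ih]
    show _ = ((cs.wordProd τ)⁻¹ * ((cs.wordProd κ)⁻¹ * cs.simple a * cs.wordProd κ) * cs.wordProd τ)
        :: ((cs.rightInvSeq κ).map _ ++ cs.rightInvSeq τ)
    rw [cs.wordProd_append, mul_inv_rev]
    congr 1
    group

theorem lis_eq_map_conj (ω : List B) :
    cs.leftInvSeq ω = (cs.rightInvSeq ω).map (fun x => cs.wordProd ω * x * (cs.wordProd ω)⁻¹) := by
  induction ω with
  | nil => simp [CoxeterSystem.leftInvSeq, CoxeterSystem.rightInvSeq]
  | cons a ω ih =>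
    show cs.simple a :: (cs.leftInvSeq ω).map (MulAut.conj (cs.simple a)) = _
    rw [ih]
    show _ = (((cs.wordProd ω)⁻¹ * cs.simple a * cs.wordProd ω) :: cs.rightInvSeq ω).map _
    rw [List.map_cons]
    congr 1
    · rw [cs.wordProd_cons, mul_inv_rev, cs.inv_simple]
      group
      rw [cs.simple_mul_simple_self, one_mul]
    · rw [List.map_map]
      apply List.map_congr_left
      intro x _
      show cs.simple a * (cs.wordProd ω * x * (cs.wordProd ω)⁻¹) * (cs.simple a)⁻¹ = _
      rw [cs.wordProd_cons, mul_inv_rev, cs.inv_simple]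
      group

theorem exists_word_odd_count {t : W} (ht : cs.IsReflection t) :
    ∃ τ : List B, cs.wordProd τ = t ∧ Odd ((cs.rightInvSeq τ).count t) := by
  obtain ⟨v, i, rfl⟩ := ht
  obtain ⟨υ, hυ⟩ := cs.wordProd_surjective v
  refine ⟨υ ++ (i :: υ.reverse), ?_, ?_⟩
  · rw [cs.wordProd_append, cs.wordProd_cons, cs.wordProd_reverse, hυ, ← mul_assoc]
  · set t := v * cs.simple i * v⁻¹ with htdef
    have hπτ : cs.wordProd (i :: υ.reverse) = cs.simple i * v⁻¹ := by
      rw [cs.wordProd_cons, cs.wordProd_reverse, hυ]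
    rw [ris_append]
    rw [List.count_append]
    -- second part
    have hris2 : cs.rightInvSeq (i :: υ.reverse)
        = t :: cs.rightInvSeq υ.reverse := by
      show ((cs.wordProd υ.reverse)⁻¹ * cs.simple i * cs.wordProd υ.reverse) :: _ = _
      rw [cs.wordProd_reverse, hυ, inv_inv, htdef]
    rw [hris2, List.count_cons_self]
    -- first part : count t (map f (ris υ)) = count (s i) (ris υ)
    have hinj : Function.Injective
        (fun x : W => (cs.wordProd (i :: υ.reverse))⁻¹ * x * cs.wordProd (i :: υ.reverse)) := by
      intro x y hxy
      dsimp at hxy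
      exact mul_left_cancel (mul_right_cancel hxy)
    have hfsi : (fun x : W => (cs.wordProd (i :: υ.reverse))⁻¹ * x * cs.wordProd (i :: υ.reverse))
        (cs.simple i) = t := by
      dsimp
      rw [hπτ, mul_inv_rev, inv_inv, cs.inv_simple, htdef]
      group
      rw [cs.simple_mul_simple_cancel_right]
    have hcount1 : ((cs.rightInvSeq υ).map
          (fun x => (cs.wordProd (i :: υ.reverse))⁻¹ * x * cs.wordProd (i :: υ.reverse))).count t
        = (cs.rightInvSeq υ).count (cs.simple i) := by
      rw [← hfsi]
      exact List.count_map_of_injective _ _ hinj _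
    -- third part : count t (ris υ.reverse) = count (s i) (ris υ)
    have hcount3 : (cs.rightInvSeq υ.reverse).count t = (cs.rightInvSeq υ).count (cs.simple i) := by
      rw [cs.rightInvSeq_reverse, List.count_reverse, lis_eq_map_conj, hυ]
      have hinj2 : Function.Injective (fun x : W => v * x * v⁻¹) := by
        intro x y hxy
        dsimp at hxy
        exact mul_left_cancel (mul_right_cancel hxy)
      have : (fun x : W => v * x * v⁻¹) (cs.simple i) = t := rfl
      rw [← this]
      exact List.count_map_of_injective _ _ hinj2 _
    rw [hcount1, hcount3]
    exact ⟨(cs.rightInvSeq υ).count (cs.simple i), by omega⟩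

theorem strong_exchange {ω : List B} (hω : cs.IsReduced ω) {t : W} (ht : cs.IsReflection t)
    (hlt : cs.length (cs.wordProd ω * t) < cs.length (cs.wordProd ω)) :
    t ∈ cs.rightInvSeq ω := by
  by_contra hmem
  obtain ⟨τ, hτ, hodd⟩ := exists_word_odd_count cs ht
  obtain ⟨κ, hκred, hκ⟩ := cs.exists_reduced_word' (cs.wordProd ω * t)
  have hword : cs.wordProd (κ ++ τ) = cs.wordProd ω := by
    rw [cs.wordProd_append, ← hκ, hτ, mul_assoc, ht.mul_self, mul_one]
  have hpar := parity_count_eq cs hword.symm t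
  have hzero : (cs.rightInvSeq ω).count t = 0 := List.count_eq_zero.mpr hmem
  rw [hzero, pow_zero] at hpar
  -- so count t (ris (κ ++ τ)) is even
  have heven : Even ((cs.rightInvSeq (κ ++ τ)).count t) := by
    by_contra hodd'
    rw [Odd.neg_one_pow (Nat.not_even_iff_odd.mp hodd')] at hpar
    exact (by decide : ¬((1 : ℤˣ) = -1)) hpar
  rw [ris_append, List.count_append] at heven
  have hconj : ((cs.rightInvSeq κ).map (fun x => (cs.wordProd τ)⁻¹ * x * cs.wordProd τ)).count t
      = (cs.rightInvSeq κ).count t := by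
    have hinj : Function.Injective (fun x : W => (cs.wordProd τ)⁻¹ * x * cs.wordProd τ) := by
      intro x y hxy
      dsimp at hxy
      exact mul_left_cancel (mul_right_cancel hxy)
    have hfix : (cs.wordProd τ)⁻¹ * t * cs.wordProd τ = t := by
      rw [hτ, ht.inv, ht.mul_self, one_mul]
    have h0 := List.count_map_of_injective (cs.rightInvSeq κ) _ hinj t
    simpa [hfix] using h0
  rw [hconj] at heven
  have hodd2 : Odd ((cs.rightInvSeq κ).count t) := by
    rcases Nat.even_or_odd ((cs.rightInvSeq κ).count t) with he | ho
    · exfalso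
      have : Even ((cs.rightInvSeq κ).count t + (cs.rightInvSeq τ).count t) → False := by
        intro h
        have := (Nat.even_add.mp h).mp he
        exact (Nat.not_odd_iff_even.mpr this) hodd
      exact this heven
    · exact ho
  obtain ⟨k, hk⟩ := hodd2
  have hmemκ : t ∈ cs.rightInvSeq κ := by
    rw [← List.count_pos_iff]
    omega
  have hinv := cs.isRightInversion_of_mem_rightInvSeq hκred hmemκ
  rw [← hκ] at hinv
  have := hinv.2
  rw [mul_assoc, ht.mul_self, mul_one] at this
  exact Nat.lt_asymm hlt this

/-! ### Basic properties of the Bruhat order -/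

theorem le_length {u v : W} (h : BruhatLE cs u v) : cs.length u ≤ cs.length v := by
  induction h with
  | refl => exact le_refl _
  | tail _ hedge ih => rw [hedge.2]; omega

theorem eq_of_le_of_length_ge {u v : W} (h : BruhatLE cs u v)
    (hl : cs.length v ≤ cs.length u) : u = v := by
  rcases Relation.ReflTransGen.cases_head h with heq | ⟨c, huc, hcv⟩
  · exact heq
  · exfalso
    have h1 := le_length cs hcv
    have h2 := huc.2
    omega

theorem edge_of_le_of_length {u v : W} (h : BruhatLE cs u v)
    (hl : cs.length v = cs.length u + 1) : BruhatEdge cs u v := by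
  rcases Relation.ReflTransGen.cases_head h with heq | ⟨c, huc, hcv⟩
  · exfalso; rw [heq] at hl; omega
  · have hcveq : c = v := eq_of_le_of_length_ge cs hcv (by rw [hl, huc.2])
    rwa [← hcveq]

theorem length_mul_simple_of_descent {u : W} {i : B} (h : cs.IsRightDescent u i) :
    cs.length (u * cs.simple i) + 1 = cs.length u := by
  rcases cs.length_mul_simple u i with h1 | h1
  · exfalso; unfold CoxeterSystem.IsRightDescent at h; omega
  · exact h1

theorem length_mul_simple_of_not_descent {u : W} {i : B} (h : ¬ cs.IsRightDescent u i) :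
    cs.length (u * cs.simple i) = cs.length u + 1 := by
  rcases cs.length_mul_simple u i with h1 | h1
  · exact h1
  · exfalso; exact h (by unfold CoxeterSystem.IsRightDescent; omega)

theorem edge_mul_simple {u : W} {i : B} (h : ¬ cs.IsRightDescent u i) :
    BruhatEdge cs u (u * cs.simple i) :=
  ⟨⟨cs.simple i, cs.isReflection_simple i, rfl⟩, length_mul_simple_of_not_descent cs h⟩

theorem edge_mul_simple' {u : W} {i : B} (h : cs.IsRightDescent u i) :
    BruhatEdge cs (u * cs.simple i) u :=
  ⟨⟨cs.simple i, cs.isReflection_simple i, (cs.simple_mul_simple_cancel_right i).symm⟩,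
    (length_mul_simple_of_descent cs h).symm⟩

/-! ### Exchange -/

theorem exchange_eraseIdx {w t : W} (ht : cs.IsReflection t)
    (hlt : cs.length (w * t) < cs.length w) {ω : List B} (hred : cs.IsReduced ω)
    (hw : cs.wordProd ω = w) :
    ∃ j, j < ω.length ∧ cs.wordProd (ω.eraseIdx j) = w * t := by
  subst hw
  have hmem := strong_exchange cs hred ht hlt
  obtain ⟨j, hj, hjt⟩ := List.mem_iff_getElem.mp hmem
  rw [cs.length_rightInvSeq] at hj
  refine ⟨j, hj, ?_⟩
  rw [← cs.wordProd_mul_getD_rightInvSeq ω j]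
  congr 1
  rw [List.getD_eq_getElem _ 1 (by rw [cs.length_rightInvSeq]; exact hj)]
  exact hjt

theorem edge_eraseIdx {u v : W} (h : BruhatEdge cs u v) {ω : List B}
    (hred : cs.IsReduced ω) (hw : cs.wordProd ω = v) :
    ∃ j, j < ω.length ∧ cs.IsReduced (ω.eraseIdx j) ∧ cs.wordProd (ω.eraseIdx j) = u := by
  obtain ⟨⟨t, ht, rfl⟩, hl⟩ := h
  have hvt : (u * t) * t = u := by rw [mul_assoc, ht.mul_self, mul_one]
  have hlt : cs.length ((u * t) * t) < cs.length (u * t) := by rw [hvt]; omega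
  obtain ⟨j, hj, hje⟩ := exchange_eraseIdx cs ht hlt hred hw
  rw [hvt] at hje
  refine ⟨j, hj, ?_, hje⟩
  unfold CoxeterSystem.IsReduced
  rw [hje, List.length_eraseIdx, if_pos hj]
  have : ω.length = cs.length (u * t) := by rw [← hw]; exact hred.symm
  omega

theorem le_exists_sublist {u v : W} (h : BruhatLE cs u v) :
    ∀ ω : List B, cs.IsReduced ω → cs.wordProd ω = v →
      ∃ σ, σ.Sublist ω ∧ cs.IsReduced σ ∧ cs.wordProd σ = u := by
  induction h with
  | refl => exact fun ω h1 h2 => ⟨ω, List.Sublist.refl ω, h1, h2⟩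
  | tail _ hedge ih =>
    intro ω h1 h2
    obtain ⟨j, _, hred', hw'⟩ := edge_eraseIdx cs hedge h1 h2
    obtain ⟨σ, hσ1, hσ2, hσ3⟩ := ih _ hred' hw'
    exact ⟨σ, hσ1.trans (List.eraseIdx_sublist ω j), hσ2, hσ3⟩

theorem one_step {a c : W} {i : B} (hac : BruhatEdge cs a c)
    (hcs : cs.IsRightDescent c i) (has : ¬ cs.IsRightDescent a i) :
    c = a * cs.simple i := by
  obtain ⟨⟨t, ht, rfl⟩, hl⟩ := hac
  set w := a * t with hwdef
  obtain ⟨κ, hκred, hκ⟩ := cs.exists_reduced_word' (w * cs.simple i)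
  have hword : cs.wordProd (κ ++ [i]) = w := by
    rw [cs.wordProd_append, cs.wordProd_singleton, ← hκ, cs.simple_mul_simple_cancel_right]
  have hκlen : κ.length = cs.length (w * cs.simple i) := by rw [hκ]; exact hκred.symm
  have hdl := length_mul_simple_of_descent cs hcs
  have hωred : cs.IsReduced (κ ++ [i]) := by
    unfold CoxeterSystem.IsReduced
    rw [hword]
    simp only [List.length_append, List.length_singleton]
    omega
  have hwt : w * t = a := by rw [hwdef, mul_assoc, ht.mul_self, mul_one]
  have hlt : cs.length (w * t) < cs.length w := by rw [hwt]; omega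
  obtain ⟨j, hj, hje⟩ := exchange_eraseIdx cs ht hlt hωred hword
  rw [hwt] at hje
  simp only [List.length_append, List.length_singleton] at hj
  by_cases hjκ : j = κ.length
  · subst hjκ
    have herase : (κ ++ [i]).eraseIdx κ.length = κ := by
      rw [List.eraseIdx_eq_take_drop_succ, List.take_left,
        List.drop_eq_nil_of_le (by simp), List.append_nil]
    rw [herase, ← hκ] at hje
    -- hje : w * s i = a
    rw [← hje, cs.simple_mul_simple_cancel_right]
  · have hjlt : j < κ.length := by omega
    exfalso
    rw [List.eraseIdx_append_of_lt_length hjlt] at hje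
    have : a * cs.simple i = cs.wordProd (κ.eraseIdx j) := by
      rw [← hje, cs.wordProd_append, cs.wordProd_singleton,
        cs.simple_mul_simple_cancel_right]
    have hlen1 : cs.length (a * cs.simple i) ≤ κ.length - 1 := by
      rw [this]
      calc cs.length (cs.wordProd (κ.eraseIdx j)) ≤ (κ.eraseIdx j).length :=
            cs.length_wordProd_le _
        _ = κ.length - 1 := by rw [List.length_eraseIdx, if_pos hjlt]
    apply has
    unfold CoxeterSystem.IsRightDescent
    omega

/-! ### Property Z -/

theorem le_sub {a b : W} (h : BruhatLE cs a b) (i : B) :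
    BruhatLE cs (a * cs.simple i) b ∨ BruhatLE cs (a * cs.simple i) (b * cs.simple i) := by
  induction h using Relation.ReflTransGen.head_induction_on with
  | refl => exact Or.inr Relation.ReflTransGen.refl
  | @head a c hac hcb ih =>
    by_cases hai : cs.IsRightDescent a i
    · left
      exact Relation.ReflTransGen.head (edge_mul_simple' cs hai)
        (Relation.ReflTransGen.head hac hcb)
    · by_cases hci : cs.IsRightDescent c i
      · left
        rw [← one_step cs hac hci hai]
        exact hcb
      · have hedge2 : BruhatEdge cs (a * cs.simple i) (c * cs.simple i) := by
          obtain ⟨⟨t, ht, rfl⟩, hl⟩ := hac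
          refine ⟨⟨cs.simple i * t * cs.simple i, ?_, ?_⟩, ?_⟩
          · have := ht.conj (cs.simple i)
            rwa [cs.inv_simple] at this
          · rw [show a * cs.simple i * (cs.simple i * t * cs.simple i)
                = a * (cs.simple i * (cs.simple i * (t * cs.simple i))) by group,
              cs.simple_mul_simple_cancel_left, ← mul_assoc]
          · rw [length_mul_simple_of_not_descent cs hci,
              length_mul_simple_of_not_descent cs hai, hl]
        rcases ih with h1 | h2
        · left; exact Relation.ReflTransGen.head hedge2 h1
        · right; exact Relation.ReflTransGen.head hedge2 h2

/-! ### Subword implies Bruhat -/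

theorem sublist_concat_cases {σ κ : List B} {i : B} (h : σ.Sublist (κ ++ [i])) :
    σ.Sublist κ ∨ ∃ σ', σ = σ' ++ [i] ∧ σ'.Sublist κ := by
  have h1 : σ.reverse.Sublist (i :: κ.reverse) := by
    rw [← List.reverse_sublist]
    simpa using h
  rcases List.sublist_cons_iff.mp h1 with h2 | ⟨r, hr1, hr2⟩
  · left
    rw [← List.reverse_sublist]at h2 ⊢
    simpa using h2
  · right
    refine ⟨r.reverse, ?_, ?_⟩
    · have := congrArg List.reverse hr1
      simpa using this
    · simpa using List.reverse_sublist.mpr hr2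

theorem sublist_le (ω : List B) : ∀ σ : List B, cs.IsReduced ω → cs.IsReduced σ →
    σ.Sublist ω → BruhatLE cs (cs.wordProd σ) (cs.wordProd ω) := by
  induction ω using List.reverseRecOn with
  | nil =>
    intro σ _ _ hsub
    rw [List.sublist_nil.mp hsub]
    exact Relation.ReflTransGen.refl
  | append_singleton κ i ih =>
    intro σ hredω hredσ hsub
    have hκred : cs.IsReduced κ := by
      have := hredω.take κ.length
      rwa [List.take_left] at this
    have hlen : cs.length (cs.wordProd (κ ++ [i])) = κ.length + 1 := by
      rw [hredω]; simp
    have hedgeκ : BruhatEdge cs (cs.wordProd κ) (cs.wordProd (κ ++ [i])) := by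
      refine ⟨⟨cs.simple i, cs.isReflection_simple i, by
        rw [cs.wordProd_append, cs.wordProd_singleton]⟩, ?_⟩
      rw [hlen, hκred]
    rcases sublist_concat_cases hsub with hcase | ⟨σ', rfl, hsub'⟩
    · exact (ih σ hκred hredσ hcase).tail hedgeκ
    · have hredσ' : cs.IsReduced σ' := by
        have := hredσ.take σ'.length
        rwa [List.take_left] at this
      have hle := ih σ' hκred hredσ' hsub'
      have hπσ : cs.wordProd (σ' ++ [i]) = cs.wordProd σ' * cs.simple i := by
        rw [cs.wordProd_append, cs.wordProd_singleton]
      rcases le_sub cs hle i with h1 | h2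
      · rw [hπσ]
        exact h1.tail hedgeκ
      · rw [hπσ, cs.wordProd_append, cs.wordProd_singleton]
        exact h2

/-! ### Lifting -/

theorem lift_desc {u w : W} (h : BruhatLE cs u w) {i : B} (hw : cs.IsRightDescent w i)
    (hu : cs.IsRightDescent u i) :
    BruhatLE cs (u * cs.simple i) (w * cs.simple i) := by
  obtain ⟨κ, hκred, hκ⟩ := cs.exists_reduced_word' (w * cs.simple i)
  have hword : cs.wordProd (κ ++ [i]) = w := by
    rw [cs.wordProd_append, cs.wordProd_singleton, ← hκ, cs.simple_mul_simple_cancel_right]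
  have hκlen : κ.length = cs.length (w * cs.simple i) := by rw [hκ]; exact hκred.symm
  have hdl := length_mul_simple_of_descent cs hw
  have hωred : cs.IsReduced (κ ++ [i]) := by
    unfold CoxeterSystem.IsReduced
    rw [hword]
    simp only [List.length_append, List.length_singleton]
    omega
  obtain ⟨σ, hσ1, hσ2, hσ3⟩ := le_exists_sublist cs h _ hωred hword
  rcases sublist_concat_cases hσ1 with hcase | ⟨σ', rfl, hsub'⟩
  · -- u ≤ w * s i, and u * s i → u is an edge
    have h1 : BruhatLE cs (cs.wordProd σ) (cs.wordProd κ) := sublist_le cs κ σ hκred hσ2 hcase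
    rw [hσ3, ← hκ] at h1
    exact Relation.ReflTransGen.head (edge_mul_simple' cs hu) h1
  · have hredσ' : cs.IsReduced σ' := by
      have := hσ2.take σ'.length
      rwa [List.take_left] at this
    have hπσ' : cs.wordProd σ' = u * cs.simple i := by
      have : cs.wordProd σ' * cs.simple i = u := by
        rw [← cs.wordProd_singleton, ← cs.wordProd_append, hσ3]
      rw [← this, cs.simple_mul_simple_cancel_right]
    have h1 := sublist_le cs κ σ' hκred hredσ' hsub'
    rw [hπσ', ← hκ] at h1
    exact h1

theorem lift_asc {u w : W} (h : BruhatLE cs u w) {i : B} (hw : cs.IsRightDescent w i)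
    (hu : ¬ cs.IsRightDescent u i) : BruhatLE cs u (w * cs.simple i) := by
  obtain ⟨κ, hκred, hκ⟩ := cs.exists_reduced_word' (w * cs.simple i)
  have hword : cs.wordProd (κ ++ [i]) = w := by
    rw [cs.wordProd_append, cs.wordProd_singleton, ← hκ, cs.simple_mul_simple_cancel_right]
  have hκlen : κ.length = cs.length (w * cs.simple i) := by rw [hκ]; exact hκred.symm
  have hdl := length_mul_simple_of_descent cs hw
  have hωred : cs.IsReduced (κ ++ [i]) := by
    unfold CoxeterSystem.IsReduced
    rw [hword]
    simp only [List.length_append, List.length_singleton]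
    omega
  obtain ⟨σ, hσ1, hσ2, hσ3⟩ := le_exists_sublist cs h _ hωred hword
  rcases sublist_concat_cases hσ1 with hcase | ⟨σ', rfl, hsub'⟩
  · have h1 : BruhatLE cs (cs.wordProd σ) (cs.wordProd κ) := sublist_le cs κ σ hκred hσ2 hcase
    rwa [hσ3, ← hκ] at h1
  · exfalso
    apply hu
    have hredσ' : cs.IsReduced σ' := by
      have := hσ2.take σ'.length
      rwa [List.take_left] at this
    have hπσ' : cs.wordProd σ' = u * cs.simple i := by
      have : cs.wordProd σ' * cs.simple i = u := by
        rw [← cs.wordProd_singleton, ← cs.wordProd_append, hσ3]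
      rw [← this, cs.simple_mul_simple_cancel_right]
    have h1 : cs.length (u * cs.simple i) = σ'.length := by rw [← hπσ']; exact hredσ'
    have h2 : cs.length u = σ'.length + 1 := by
      rw [← hσ3, hσ2]; simp
    unfold CoxeterSystem.IsRightDescent
    omega

theorem us_le_w {u w : W} (h : BruhatLE cs u w) {i : B} (hw : cs.IsRightDescent w i) :
    BruhatLE cs (u * cs.simple i) w := by
  rcases le_sub cs h i with h1 | h2
  · exact h1
  · exact h2.tail (edge_mul_simple' cs hw)

/-! ### The diamond lemma -/

theorem diamond (n : ℕ) : ∀ u w : W, cs.length w = n → BruhatLE cs u w →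
    cs.length w = cs.length u + 2 →
    ∃ a b : W, a ≠ b ∧ {x : W | BruhatEdge cs u x ∧ BruhatEdge cs x w} = {a, b} := by
  induction n using Nat.strong_induction_on with
  | _ n ih =>
  intro u w hn hle hlen
  have hw1 : w ≠ 1 := by
    intro h
    rw [h, cs.length_one] at hlen
    omega
  obtain ⟨i, hdes⟩ := cs.exists_rightDescent_of_ne_one hw1
  have hlw' : cs.length (w * cs.simple i) + 1 = cs.length w := length_mul_simple_of_descent cs hdes
  have hedge_w'_w : BruhatEdge cs (w * cs.simple i) w := edge_mul_simple' cs hdes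
  by_cases hu : cs.IsRightDescent u i
  · -- Case 1 : i is also a descent of u; induct
    have hlu' : cs.length (u * cs.simple i) + 1 = cs.length u := length_mul_simple_of_descent cs hu
    have h' : BruhatLE cs (u * cs.simple i) (w * cs.simple i) := lift_desc cs hle hdes hu
    obtain ⟨a', b', hne', hset'⟩ := ih (cs.length (w * cs.simple i)) (by omega)
      (u * cs.simple i) (w * cs.simple i) rfl h' (by omega)
    have ha'mem : BruhatEdge cs (u * cs.simple i) a' ∧ BruhatEdge cs a' (w * cs.simple i) := by
      have : a' ∈ {x : W | BruhatEdge cs (u * cs.simple i) x ∧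
          BruhatEdge cs x (w * cs.simple i)} := by rw [hset']; left; rfl
      exact this
    have hb'mem : BruhatEdge cs (u * cs.simple i) b' ∧ BruhatEdge cs b' (w * cs.simple i) := by
      have : b' ∈ {x : W | BruhatEdge cs (u * cs.simple i) x ∧
          BruhatEdge cs x (w * cs.simple i)} := by rw [hset']; right; rfl
      exact this
    have hedge_u'_u : BruhatEdge cs (u * cs.simple i) u := edge_mul_simple' cs hu
    have hlenN' : ∀ y : W, BruhatEdge cs (u * cs.simple i) y → cs.length y = cs.length u := by
      intro y hy
      rw [hy.2]; omega
    -- claim A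
    have claimA : ∀ x : W, BruhatEdge cs u x → BruhatEdge cs x w →
        (x = w * cs.simple i ∧ (BruhatEdge cs (u * cs.simple i) u ∧
          BruhatEdge cs u (w * cs.simple i))) ∨
        (x ≠ w * cs.simple i ∧ (BruhatEdge cs (u * cs.simple i) (x * cs.simple i) ∧
          BruhatEdge cs (x * cs.simple i) (w * cs.simple i))) := by
      intro x hux hxw
      by_cases hxi : cs.IsRightDescent x i
      · right
        have hlx' : cs.length (x * cs.simple i) + 1 = cs.length x :=
          length_mul_simple_of_descent cs hxi
        constructor
        · intro hxw'
          rw [hxw'] at hlx'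
          rw [cs.simple_mul_simple_cancel_right] at hlx'
          have h2 := hxw.2
          rw [hxw'] at h2
          omega
        · constructor
          · have h1 := lift_desc cs (Relation.ReflTransGen.single hux) hxi hu
            apply edge_of_le_of_length cs h1
            have := hux.2
            omega
          · have h1 := lift_desc cs (Relation.ReflTransGen.single hxw) hdes hxi
            apply edge_of_le_of_length cs h1
            have := hxw.2
            omega
      · left
        have hx : w = x * cs.simple i := one_step cs hxw hdes hxi
        have hxval : x = w * cs.simple i := by
          rw [hx, cs.simple_mul_simple_cancel_right]
        refine ⟨hxval, hedge_u'_u, ?_⟩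
        rw [← hxval]
        exact hux
    -- claim B
    have claimB : ∀ y : W, BruhatEdge cs (u * cs.simple i) y → BruhatEdge cs y (w * cs.simple i) →
        y ≠ u → BruhatEdge cs u (y * cs.simple i) ∧ BruhatEdge cs (y * cs.simple i) w := by
      intro y hu'y hyw' hyu
      have hnd_u' : ¬ cs.IsRightDescent (u * cs.simple i) i := by
        unfold CoxeterSystem.IsRightDescent
        rw [cs.simple_mul_simple_cancel_right]
        omega
      have hyi : ¬ cs.IsRightDescent y i := by
        intro hdy
        apply hyu
        have := one_step cs hu'y hdy hnd_u'
        rw [this, cs.simple_mul_simple_cancel_right]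
      have hly : cs.length y = cs.length u := hlenN' y hu'y
      have hlys : cs.length (y * cs.simple i) = cs.length u + 1 := by
        rw [length_mul_simple_of_not_descent cs hyi, hly]
      constructor
      · rcases le_sub cs (Relation.ReflTransGen.single hu'y) i with h1 | h2
        · exfalso
          rw [cs.simple_mul_simple_cancel_right] at h1
          exact hyu (eq_of_le_of_length_ge cs h1 (by omega)).symm
        · rw [cs.simple_mul_simple_cancel_right] at h2
          exact edge_of_le_of_length cs h2 (by omega)
      · rcases le_sub cs (Relation.ReflTransGen.single hyw') i with h1 | h2
        · exfalso
          have heq : y * cs.simple i = w * cs.simple i :=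
            eq_of_le_of_length_ge cs h1 (by omega)
          have : y = w := mul_right_cancel heq
          rw [this] at hly
          omega
        · rw [cs.simple_mul_simple_cancel_right] at h2
          exact edge_of_le_of_length cs h2 (by omega)
    have hla' : cs.length a' = cs.length u := hlenN' a' ha'mem.1
    have hlb' : cs.length b' = cs.length u := hlenN' b' hb'mem.1
    refine ⟨if a' = u then w * cs.simple i else a' * cs.simple i,
            if b' = u then w * cs.simple i else b' * cs.simple i, ?_, ?_⟩
    · by_cases ha : a' = u <;> by_cases hb : b' = u
      · exact absurd (ha.trans hb.symm) hne'
      · rw [if_pos ha, if_neg hb]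
        intro h
        have : w = b' := mul_right_cancel h
        rw [← this] at hlb'
        omega
      · rw [if_neg ha, if_pos hb]
        intro h
        have : a' = w := mul_right_cancel h
        rw [this] at hla'
        omega
      · rw [if_neg ha, if_neg hb]
        intro h
        exact hne' (mul_right_cancel h)
    · ext x
      simp only [Set.mem_setOf_eq, Set.mem_insert_iff, Set.mem_singleton_iff]
      constructor
      · rintro ⟨hux, hxw⟩
        rcases claimA x hux hxw with ⟨hxval, hm1, hm2⟩ | ⟨hxne, hm1, hm2⟩
        · -- x = w * s i, and u ∈ N'
          have humem : u ∈ ({a', b'} : Set W) := by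
            rw [← hset']
            exact ⟨hm1, hm2⟩
          simp only [Set.mem_insert_iff, Set.mem_singleton_iff] at humem
          rcases humem with hua | hub
          · left
            rw [if_pos hua.symm, hxval]
          · right
            rw [if_pos hub.symm, hxval]
        · -- x * s i ∈ N'
          have hxmem : x * cs.simple i ∈ ({a', b'} : Set W) := by
            rw [← hset']
            exact ⟨hm1, hm2⟩
          simp only [Set.mem_insert_iff, Set.mem_singleton_iff] at hxmem
          have hlx : cs.length x = cs.length u + 1 := hux.2
          rcases hxmem with hxa | hxb
          · left
            have hane : a' ≠ u := by
              intro h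
              rw [h] at hxa
              have hxu : x = u * cs.simple i := by
                rw [← hxa, cs.simple_mul_simple_cancel_right]
              rw [hxu] at hlx
              omega
            rw [if_neg hane, ← hxa, cs.simple_mul_simple_cancel_right]
          · right
            have hbne : b' ≠ u := by
              intro h
              rw [h] at hxb
              have hxu : x = u * cs.simple i := by
                rw [← hxb, cs.simple_mul_simple_cancel_right]
              rw [hxu] at hlx
              omega
            rw [if_neg hbne, ← hxb, cs.simple_mul_simple_cancel_right]
      · rintro (rfl | rfl)
        · by_cases ha : a' = u
          · rw [if_pos ha]
            refine ⟨?_, hedge_w'_w⟩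
            rw [← ha]
            exact ha'mem.2
          · rw [if_neg ha]
            exact claimB a' ha'mem.1 ha'mem.2 ha
        · by_cases hb : b' = u
          · rw [if_pos hb]
            refine ⟨?_, hedge_w'_w⟩
            rw [← hb]
            exact hb'mem.2
          · rw [if_neg hb]
            exact claimB b' hb'mem.1 hb'mem.2 hb
  · -- Case 2 : i is an ascent of u
    have h1 : BruhatLE cs u (w * cs.simple i) := lift_asc cs hle hdes hu
    have hedge_u_w' : BruhatEdge cs u (w * cs.simple i) := edge_of_le_of_length cs h1 (by omega)
    have h2 : BruhatLE cs (u * cs.simple i) w := us_le_w cs hle hdes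
    have hlus : cs.length (u * cs.simple i) = cs.length u + 1 :=
      length_mul_simple_of_not_descent cs hu
    have hedge_u_us : BruhatEdge cs u (u * cs.simple i) := edge_mul_simple cs hu
    have hedge_us_w : BruhatEdge cs (u * cs.simple i) w := edge_of_le_of_length cs h2 (by omega)
    refine ⟨u * cs.simple i, w * cs.simple i, ?_, ?_⟩
    · intro h
      have : u = w := mul_right_cancel h
      rw [this] at hlen
      omega
    · ext x
      simp only [Set.mem_setOf_eq, Set.mem_insert_iff, Set.mem_singleton_iff]
      constructor
      · rintro ⟨hux, hxw⟩
        by_cases hxi : cs.IsRightDescent x i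
        · left
          have h3 := lift_asc cs (Relation.ReflTransGen.single hux) hxi hu
          have hlx : cs.length (x * cs.simple i) + 1 = cs.length x :=
            length_mul_simple_of_descent cs hxi
          have h4 : cs.length x = cs.length u + 1 := hux.2
          have h5 : u = x * cs.simple i := eq_of_le_of_length_ge cs h3 (by omega)
          rw [h5, cs.simple_mul_simple_cancel_right]
        · right
          have := one_step cs hxw hdes hxi
          rw [this, cs.simple_mul_simple_cancel_right]
      · rintro (rfl | rfl)
        · exact ⟨hedge_u_us, hedge_us_w⟩
        · exact ⟨hedge_u_w', hedge_w'_w⟩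

end BGGAux

/-- BGG square (diamond) lemma: if `w ≤ w''` in the Bruhat order and
`ℓ(w'') = ℓ(w) + 2`, then the number of `w'` with edges `w → w'` and `w' → w''` is
either zero or two. -/
theorem stmt_8 {B W : Type} [Group W] {M : CoxeterMatrix B} (cs : CoxeterSystem M W)
    (w w'' : W) (hle : BruhatLE cs w w'') (hlen : cs.length w'' = cs.length w + 2) :
    {w' : W | BruhatEdge cs w w' ∧ BruhatEdge cs w' w''}.ncard = 0 ∨
    {w' : W | BruhatEdge cs w w' ∧ BruhatEdge cs w' w''}.ncard = 2 := by
  right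
  obtain ⟨a, b, hne, hset⟩ := BGGAux.diamond cs (cs.length w'') w w'' rfl hle hlen
  rw [hset]
  exact Set.ncard_pair hne
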